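/- For every real s, ∫₁^∞ u^{−s/2+2} θ(u) θ''(u) du = −θ(1)θ'(1) − (1/4)(s−4)(θ(1)² − 1) + (1/8)(s−2)(s−4) K₀(2−s) − K₁(2−s). -/

import Mathlib

/-!
Differentiating the theta series termwise gives `θ⁽ᵏ⁾(u) = ∑ₙ (-πn²)ᵏ e^{-πn²u}` for `u > 0`,
and on `[1, ∞)` the derivatives, as well as `θ - 1`, decay like `e^{-πu}`. With `a = 2 - s/2`
the identity comes from two integrations by parts: of `u^a (θθ')' = u^a (θ'² + θθ'')`, which
leaves `∫ u^{a-1} θθ'`, and of `u^{a-1} (θ² - 1)' = 2 u^{a-1} θθ'`, which turns that integral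
into `K₀(2 - s)`.
-/

open MeasureTheory

/-- The Jacobi theta function `θ(u) = ∑_{n∈ℤ} e^{-πn²u}`. -/
noncomputable def jTheta (u : ℝ) : ℝ := ∑' n : ℤ, Real.exp (-Real.pi * (n : ℝ) ^ 2 * u)

/-- `K₀(s) = ∫₁^∞ u^{s/2-1}(θ(u)²-1) du`. -/
noncomputable def Kzero (s : ℝ) : ℝ :=
  ∫ u in Set.Ioi (1 : ℝ), u ^ (s / 2 - 1) * ((jTheta u) ^ 2 - 1)

/-- `K₁(s) = ∫₁^∞ u^{s/2+1} θ'(u)² du`. -/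
noncomputable def Kone (s : ℝ) : ℝ :=
  ∫ u in Set.Ioi (1 : ℝ), u ^ (s / 2 + 1) * (deriv jTheta u) ^ 2

open Real Set Filter Topology Asymptotics

noncomputable section

section Decay

variable {f : ℝ → ℝ} {c : ℝ}

lemma isBigO_rpow_mul_of_isBigO_exp (hc : 0 < c) (hf : f =O[atTop] fun u ↦ exp (-c * u))
    (b : ℝ) : (fun u ↦ u ^ b * f u) =O[atTop] fun u ↦ exp (-(c / 2) * u) :=
  ((isLittleO_rpow_exp_pos_mul_atTop b (half_pos hc)).isBigO.mul hf).congr_right fun u ↦ by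
    rw [← exp_add]
    ring_nf

lemma tendsto_rpow_mul_of_isBigO_exp (hc : 0 < c) (hf : f =O[atTop] fun u ↦ exp (-c * u))
    (b : ℝ) : Tendsto (fun u ↦ u ^ b * f u) atTop (𝓝 0) :=
  (isBigO_rpow_mul_of_isBigO_exp hc hf b).trans_tendsto <| tendsto_exp_comp_nhds_zero.2 <|
    tendsto_id.const_mul_atTop_of_neg (neg_lt_zero.2 (half_pos hc))

lemma integrableOn_rpow_mul_of_isBigO_exp {a : ℝ} (ha : 0 < a) (hc : 0 < c)
    (hcont : ContinuousOn f (Ici a)) (hf : f =O[atTop] fun u ↦ exp (-c * u)) (b : ℝ) :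
    IntegrableOn (fun u ↦ u ^ b * f u) (Ioi a) :=
  integrable_of_isBigO_exp_neg (half_pos hc)
    ((continuousOn_id.rpow_const fun _ hu ↦ Or.inl (ha.trans_le hu).ne').mul hcont)
    (isBigO_rpow_mul_of_isBigO_exp hc hf b)

lemma integral_Ioi_rpow_mul_deriv {f' : ℝ → ℝ} {a : ℝ} (ha : 0 < a) (hc : 0 < c)
    (hderiv : ∀ x ∈ Ici a, HasDerivAt f (f' x) x) (hcont : ContinuousOn f' (Ici a))
    (hf : f =O[atTop] fun u ↦ exp (-c * u)) (hf' : f' =O[atTop] fun u ↦ exp (-c * u))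
    (b : ℝ) :
    ∫ u in Ioi a, u ^ b * f' u = -(a ^ b * f a) - b * ∫ u in Ioi a, u ^ (b - 1) * f u := by
  have hfcont : ContinuousOn f (Ici a) := fun x hx ↦
    (hderiv x hx).continuousAt.continuousWithinAt
  have hint := (integrableOn_rpow_mul_of_isBigO_exp ha hc hfcont hf (b - 1)).const_mul b
  have hint' := integrableOn_rpow_mul_of_isBigO_exp ha hc hcont hf' b
  have hftc := integral_Ioi_of_hasDerivAt_of_tendsto' (fun x hx ↦
    ((hasDerivAt_rpow_const (Or.inl (ha.trans_le hx).ne')).mul (hderiv x hx)).congr_deriv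
      (by simp only [Pi.add_apply]; ring)) (hint.add hint') (tendsto_rpow_mul_of_isBigO_exp hc hf b)
  simp only [Pi.add_apply, Pi.mul_apply] at hftc
  rw [integral_add hint hint', integral_const_mul] at hftc
  linarith

end Decay

def jThetaTerm (k : ℕ) (u : ℝ) (n : ℤ) : ℝ := (-π * n ^ 2) ^ k * exp (-π * n ^ 2 * u)

def jThetaDeriv (k : ℕ) (u : ℝ) : ℝ := ∑' n : ℤ, jThetaTerm k u n

lemma norm_jThetaTerm (k : ℕ) (u : ℝ) (n : ℤ) :
    ‖jThetaTerm k u n‖ = π ^ k * (|(n : ℝ)| ^ (2 * k) * exp (-π * n ^ 2 * u)) := by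
  rw [jThetaTerm, norm_mul, norm_of_nonneg (exp_pos _).le, norm_pow, norm_mul, norm_neg,
    norm_of_nonneg pi_pos.le, Real.norm_eq_abs, abs_pow, mul_pow, pow_mul, sq_abs]
  ring

lemma summable_norm_jThetaTerm (k : ℕ) {u : ℝ} (hu : 0 < u) :
    Summable fun n ↦ ‖jThetaTerm k u n‖ := by
  refine ((summable_pow_mul_jacobiTheta₂_term_bound 0 hu (2 * k)).mul_left (π ^ k)).congr
    fun n ↦ ?_
  rw [norm_jThetaTerm, Int.cast_abs]
  ring_nf

lemma jThetaTerm_zero_right (k : ℕ) (u : ℝ) : jThetaTerm k u 0 = 0 ^ k := by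
  simp [jThetaTerm]

lemma norm_jThetaTerm_antitone (k : ℕ) (n : ℤ) : Antitone fun u ↦ ‖jThetaTerm k u n‖ := by
  intro u v huv
  simp only [norm_jThetaTerm]
  gcongr π ^ k * (_ * exp ?_)
  exact mul_le_mul_of_nonpos_left huv (by nlinarith [pi_pos, sq_nonneg (n : ℝ)])

lemma norm_jThetaTerm_le_of_ne_zero (k : ℕ) {u : ℝ} (hu : 1 ≤ u) {n : ℤ} (hn : n ≠ 0) :
    ‖jThetaTerm k u n‖ ≤ ‖jThetaTerm k 1 n‖ * exp (-π * (u - 1)) := by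
  have hn2 : (1 : ℝ) ≤ (n : ℝ) ^ 2 := by
    have : (1 : ℝ) ≤ |(n : ℝ)| := by exact_mod_cast Int.one_le_abs hn
    nlinarith [sq_abs (n : ℝ)]
  have h : exp (-π * n ^ 2 * u) ≤ exp (-π * n ^ 2 * 1) * exp (-π * (u - 1)) := by
    rw [← exp_add]
    exact exp_le_exp.2 (by nlinarith [mul_nonneg (sub_nonneg.2 hn2) (sub_nonneg.2 hu), pi_pos])
  rw [norm_jThetaTerm, norm_jThetaTerm]
  calc _ ≤ π ^ k * (|(n : ℝ)| ^ (2 * k) * (exp (-π * n ^ 2 * 1) * exp (-π * (u - 1)))) := by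
        gcongr
    _ = _ := by ring

lemma hasDerivAt_jThetaTerm (k : ℕ) (u : ℝ) (n : ℤ) :
    HasDerivAt (fun v ↦ jThetaTerm k v n) (jThetaTerm (k + 1) u n) u := by
  refine (((hasDerivAt_id u).const_mul (-π * n ^ 2)).exp.const_mul
    ((-π * (n : ℝ) ^ 2) ^ k)).congr_deriv ?_
  simp only [jThetaTerm, id, pow_succ]
  ring

lemma jThetaDeriv_zero : jThetaDeriv 0 = jTheta := by
  ext u
  simp [jThetaDeriv, jThetaTerm, jTheta]

lemma hasDerivAt_jThetaDeriv (k : ℕ) {u : ℝ} (hu : 0 < u) :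
    HasDerivAt (jThetaDeriv k) (jThetaDeriv (k + 1) u) u :=
  hasDerivAt_tsum_of_isPreconnected (summable_norm_jThetaTerm (k + 1) (half_pos hu))
    isOpen_Ioi isPreconnected_Ioi (fun n v _ ↦ hasDerivAt_jThetaTerm k v n)
    (fun n _ hv ↦ norm_jThetaTerm_antitone (k + 1) n (le_of_lt hv))
    (half_lt_self hu) (summable_norm_jThetaTerm k hu).of_norm (half_lt_self hu)

lemma continuousOn_jThetaDeriv (k : ℕ) : ContinuousOn (jThetaDeriv k) (Ioi 0) :=
  fun _ hu ↦ (hasDerivAt_jThetaDeriv k hu).continuousAt.continuousWithinAt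

lemma iteratedDeriv_jTheta (k : ℕ) {u : ℝ} (hu : 0 < u) :
    iteratedDeriv k jTheta u = jThetaDeriv k u := by
  induction k generalizing u with
  | zero => rw [iteratedDeriv_zero, jThetaDeriv_zero]
  | succ k ih =>
    rw [iteratedDeriv_succ, (eventuallyEq_of_mem (Ioi_mem_nhds hu) fun v hv ↦ ih hv).deriv_eq]
    exact (hasDerivAt_jThetaDeriv k hu).deriv

lemma norm_jThetaDeriv_le (k : ℕ) {u : ℝ} (hu : 1 ≤ u) :
    ‖jThetaDeriv k u‖ ≤ ∑' n, ‖jThetaTerm k 1 n‖ :=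
  tsum_of_norm_bounded (summable_norm_jThetaTerm k one_pos).hasSum
    fun n ↦ norm_jThetaTerm_antitone k n hu

-- `0 ^ k` is the `n = 0` term of the series: `1` for `θ` itself, `0` for its derivatives.
lemma norm_jThetaDeriv_sub_le (k : ℕ) {u : ℝ} (hu : 1 ≤ u) :
    ‖jThetaDeriv k u - 0 ^ k‖ ≤ (∑' n, ‖jThetaTerm k 1 n‖) * exp (-π * (u - 1)) := by
  have hs := (summable_norm_jThetaTerm k (one_pos.trans_le hu)).of_norm
  rw [jThetaDeriv, hs.tsum_eq_add_tsum_ite 0, jThetaTerm_zero_right, add_sub_cancel_left,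
    ← tsum_mul_right]
  refine tsum_of_norm_bounded ((summable_norm_jThetaTerm k one_pos).mul_right _).hasSum
    fun n ↦ ?_
  split_ifs with hn
  · rw [norm_zero]
    positivity
  · exact norm_jThetaTerm_le_of_ne_zero k hu hn

lemma isBigO_jThetaDeriv_one (k : ℕ) : jThetaDeriv k =O[atTop] fun _ ↦ (1 : ℝ) :=
  IsBigO.of_bound (∑' n, ‖jThetaTerm k 1 n‖) <| by
    filter_upwards [eventually_ge_atTop 1] with u hu
    simpa using norm_jThetaDeriv_le k hu

lemma isBigO_jThetaDeriv_sub (k : ℕ) :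
    (fun u ↦ jThetaDeriv k u - 0 ^ k) =O[atTop] fun u ↦ exp (-π * u) :=
  IsBigO.of_bound ((∑' n, ‖jThetaTerm k 1 n‖) * exp π) <| by
    filter_upwards [eventually_ge_atTop 1] with u hu
    rw [norm_of_nonneg (exp_pos _).le, mul_assoc, ← exp_add]
    convert norm_jThetaDeriv_sub_le k hu using 3
    ring

lemma isBigO_jThetaDeriv_succ (k : ℕ) :
    jThetaDeriv (k + 1) =O[atTop] fun u ↦ exp (-π * u) := by
  simpa using isBigO_jThetaDeriv_sub (k + 1)

lemma isBigO_jThetaDeriv_mul_jThetaDeriv_succ (i k : ℕ) :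
    (fun u ↦ jThetaDeriv i u * jThetaDeriv (k + 1) u) =O[atTop] fun u ↦ exp (-π * u) := by
  simpa using (isBigO_jThetaDeriv_one i).mul (isBigO_jThetaDeriv_succ k)

lemma isBigO_jTheta_sq_sub_one :
    (fun u ↦ jTheta u ^ 2 - 1) =O[atTop] fun u ↦ exp (-π * u) := by
  have h := ((isBigO_jThetaDeriv_one 0).add (isBigO_const_const 1 one_ne_zero atTop)).mul
    (isBigO_jThetaDeriv_sub 0)
  simp only [jThetaDeriv_zero, pow_zero, one_mul] at h
  exact h.congr_left fun _ ↦ by ring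

theorem integral_rpow_mul_jTheta_mul_jThetaDeriv_two (a : ℝ) :
    ∫ u in Ioi 1, u ^ a * (jTheta u * jThetaDeriv 2 u) =
      -(jTheta 1 * jThetaDeriv 1 1) + a / 2 * (jTheta 1 ^ 2 - 1)
        + a * (a - 1) / 2 * (∫ u in Ioi 1, u ^ (a - 2) * (jTheta u ^ 2 - 1))
        - ∫ u in Ioi 1, u ^ a * jThetaDeriv 1 u ^ 2 := by
  have hderiv (k : ℕ) : ∀ x ∈ Ici (1 : ℝ), HasDerivAt (jThetaDeriv k) (jThetaDeriv (k + 1) x) x :=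
    fun x hx ↦ hasDerivAt_jThetaDeriv k (one_pos.trans_le hx)
  have hcont (k : ℕ) : ContinuousOn (jThetaDeriv k) (Ici 1) :=
    (continuousOn_jThetaDeriv k).mono (Ici_subset_Ioi.2 one_pos)
  rw [← jThetaDeriv_zero]
  have hO₀₁ := isBigO_jThetaDeriv_mul_jThetaDeriv_succ 0 0
  have hO₀₂ := isBigO_jThetaDeriv_mul_jThetaDeriv_succ 0 1
  have hO₁₁ := (isBigO_jThetaDeriv_mul_jThetaDeriv_succ 1 0).congr_left fun u ↦ (sq _).symm
  have hint₀₂ : IntegrableOn (fun u ↦ u ^ a * (jThetaDeriv 0 u * jThetaDeriv 2 u)) (Ioi 1) :=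
    integrableOn_rpow_mul_of_isBigO_exp one_pos pi_pos ((hcont 0).mul (hcont 2)) hO₀₂ a
  have hint₁₁ : IntegrableOn (fun u ↦ u ^ a * jThetaDeriv 1 u ^ 2) (Ioi 1) :=
    integrableOn_rpow_mul_of_isBigO_exp one_pos pi_pos ((hcont 1).pow 2) hO₁₁ a
  have ibp₁ := integral_Ioi_rpow_mul_deriv (f := fun u ↦ jThetaDeriv 0 u * jThetaDeriv 1 u)
    (f' := fun u ↦ jThetaDeriv 1 u ^ 2 + jThetaDeriv 0 u * jThetaDeriv 2 u) one_pos pi_pos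
    (fun x hx ↦ ((hderiv 0 x hx).mul (hderiv 1 x hx)).congr_deriv (by ring))
    (((hcont 1).pow 2).add ((hcont 0).mul (hcont 2))) hO₀₁ (hO₁₁.add hO₀₂) a
  have ibp₂ := integral_Ioi_rpow_mul_deriv (f := fun u ↦ jThetaDeriv 0 u ^ 2 - 1)
    (f' := fun u ↦ 2 * (jThetaDeriv 0 u * jThetaDeriv 1 u)) one_pos pi_pos
    (fun x hx ↦ (((hderiv 0 x hx).pow 2).sub_const 1).congr_deriv (by push_cast; ring))
    (continuousOn_const.mul ((hcont 0).mul (hcont 1)))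
    (jThetaDeriv_zero ▸ isBigO_jTheta_sq_sub_one) (hO₀₁.const_mul_left 2) (a - 1)
  simp only [mul_add] at ibp₁
  rw [integral_add hint₁₁ hint₀₂] at ibp₁
  simp only [mul_left_comm _ (2 : ℝ)] at ibp₂
  rw [integral_const_mul, show a - 1 - 1 = a - 2 by ring] at ibp₂
  simp only [one_rpow, one_mul] at ibp₁ ibp₂
  linear_combination ibp₁ - a / 2 * ibp₂

end

/-- For every real `s`,
`∫₁^∞ u^{-s/2+2} θ(u)θ''(u) du
  = -θ(1)θ'(1) - (1/4)(s-4)(θ(1)²-1) + (1/8)(s-2)(s-4) K₀(2-s) - K₁(2-s)`. -/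
theorem J2_eval (s : ℝ) :
    (∫ u in Set.Ioi (1 : ℝ), u ^ (-s / 2 + 2) * (jTheta u * deriv (deriv jTheta) u))
      = -(jTheta 1 * deriv jTheta 1) - (1 / 4) * (s - 4) * ((jTheta 1) ^ 2 - 1)
        + (1 / 8) * (s - 2) * (s - 4) * Kzero (2 - s) - Kone (2 - s) := by
  have h₁ {u : ℝ} (hu : 0 < u) : deriv jTheta u = jThetaDeriv 1 u := by
    rw [← iteratedDeriv_one, iteratedDeriv_jTheta 1 hu]
  have h₂ {u : ℝ} (hu : 0 < u) : deriv (deriv jTheta) u = jThetaDeriv 2 u := by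
    rw [← iteratedDeriv_jTheta 2 hu, iteratedDeriv_succ, iteratedDeriv_one]
  have hK₀ : Kzero (2 - s) = ∫ u in Ioi 1, u ^ (-s / 2 + 2 - 2) * (jTheta u ^ 2 - 1) := by
    rw [Kzero, show (2 - s) / 2 - 1 = -s / 2 + 2 - 2 by ring]
  have hK₁ : Kone (2 - s) = ∫ u in Ioi 1, u ^ (-s / 2 + 2) * jThetaDeriv 1 u ^ 2 := by
    rw [Kone, show (2 - s) / 2 + 1 = -s / 2 + 2 by ring]
    exact setIntegral_congr_fun measurableSet_Ioi fun u hu ↦ by rw [h₁ (one_pos.trans hu)]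
  rw [setIntegral_congr_fun measurableSet_Ioi fun u hu ↦ by rw [h₂ (one_pos.trans hu)],
    integral_rpow_mul_jTheta_mul_jThetaDeriv_two, hK₀, hK₁, h₁ one_pos]
  ring
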